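/- Let M = ℂ⟨p,q⟩/(p² − p, q² − q) be the quotient of the free ℂ-algebra on two generators by the relations making p and q idempotent, and let M₀ = ℂ[p̄]/(p̄² − p̄). Then: (1) there is a well-defined unital algebra homomorphism Δ_L : M → M₀ ⊗ M with Δ_L(p) = p̄ ⊗ p + (1 − p̄) ⊗ q and Δ_L(q) = 1 ⊗ q; (2) the fixed-point subalgebra {h ∈ M : Δ_L(h) = 1 ⊗ h} equals the two-dimensional linear span of 1 and q, i.e. the subalgebra of M generated by q. (This identifies the base of the homogeneous quantum principal bundle M(ℂ(Σ)) → M₀(ℂ(Σ)) for the two-point set Σ as ℂ(Σ).) -/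

import Mathlib

open scoped TensorProduct
set_option synthInstance.maxHeartbeats 1000000
set_option maxHeartbeats 1000000
set_option linter.unnecessarySimpa false

noncomputable section
namespace Stmt11

/-- The free ℂ-algebra on the two generators `p`, `q`. -/
abbrev F : Type := FreeAlgebra ℂ (Fin 2)

/-- The generator `p`. -/
def p : F := FreeAlgebra.ι ℂ 0

/-- The generator `q`. -/
def q : F := FreeAlgebra.ι ℂ 1

/-- The relation making `p` and `q` idempotent. -/
def rel : F → F → Prop := fun x y => (x = p ^ 2 ∧ y = p) ∨ (x = q ^ 2 ∧ y = q)

/-- `M = ℂ⟨p,q⟩/(p² − p, q² − q)`. -/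
abbrev M : Type := RingQuot rel

/-- The image of `p` in `M`. -/
def pp : M := RingQuot.mkAlgHom ℂ rel p

/-- The image of `q` in `M`. -/
def qq : M := RingQuot.mkAlgHom ℂ rel q

/-- `M₀ = ℂ[p̄]/(p̄² − p̄)`. -/
abbrev M₀ : Type := Polynomial ℂ ⧸ Ideal.span {(Polynomial.X : Polynomial ℂ) ^ 2 - Polynomial.X}

/-- The image of `p̄` in `M₀`. -/
def pbar : M₀ := Ideal.Quotient.mk _ Polynomial.X

/-- Characterization of the coaction `Δ_L`. -/
def IsCoactL (D : M →ₐ[ℂ] M₀ ⊗[ℂ] M) : Prop :=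
  D pp = pbar ⊗ₜ[ℂ] pp + (1 - pbar) ⊗ₜ[ℂ] qq ∧ D qq = 1 ⊗ₜ[ℂ] qq

-- basic idempotency lemmas
lemma pp_sq : pp * pp = pp := by
  have h : RingQuot.mkAlgHom ℂ rel (p ^ 2) = RingQuot.mkAlgHom ℂ rel p :=
    RingQuot.mkAlgHom_rel ℂ (Or.inl ⟨rfl, rfl⟩)
  simpa [pp, pow_two, map_mul] using h

lemma qq_sq : qq * qq = qq := by
  have h : RingQuot.mkAlgHom ℂ rel (q ^ 2) = RingQuot.mkAlgHom ℂ rel q :=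
    RingQuot.mkAlgHom_rel ℂ (Or.inr ⟨rfl, rfl⟩)
  simpa [qq, pow_two, map_mul] using h

lemma pbar_sq : pbar * pbar = pbar := by
  have h : ((Polynomial.X : Polynomial ℂ) ^ 2 - Polynomial.X) ∈
      Ideal.span {(Polynomial.X : Polynomial ℂ) ^ 2 - Polynomial.X} :=
    Ideal.subset_span rfl
  have := (Ideal.Quotient.eq (I := Ideal.span {(Polynomial.X : Polynomial ℂ) ^ 2 - Polynomial.X})
    (x := (Polynomial.X : Polynomial ℂ) ^ 2) (y := Polynomial.X)).mpr h
  simpa [pbar, pow_two, map_mul] using this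

-- the span S
lemma one_mem_S : (1 : M) ∈ Submodule.span ℂ ({1, qq} : Set M) :=
  Submodule.subset_span (Or.inl rfl)
lemma qq_mem_S : qq ∈ Submodule.span ℂ ({1, qq} : Set M) :=
  Submodule.subset_span (Or.inr rfl)

lemma S_mul {a b : M} (ha : a ∈ Submodule.span ℂ ({1, qq} : Set M))
    (hb : b ∈ Submodule.span ℂ ({1, qq} : Set M)) :
    a * b ∈ Submodule.span ℂ ({1, qq} : Set M) := by
  induction ha using Submodule.span_induction with
  | mem x hx =>
    induction hb using Submodule.span_induction with
    | mem y hy =>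
      rcases hx with rfl | rfl <;> rcases hy with rfl | rfl <;>
        simp [qq_sq, one_mem_S, qq_mem_S]
    | zero => simpa using Submodule.zero_mem _
    | add y z _ _ hy hz => rw [mul_add]; exact add_mem hy hz
    | smul c y _ hy => rw [mul_smul_comm]; exact Submodule.smul_mem _ c hy
  | zero => simpa using Submodule.zero_mem _
  | add x y _ _ hx hy => rw [add_mul]; exact add_mem hx hy
  | smul c x _ hx => rw [smul_mul_assoc]; exact Submodule.smul_mem _ c hx

-- construction of D
def P : M₀ ⊗[ℂ] M := pbar ⊗ₜ[ℂ] pp + (1 - pbar) ⊗ₜ[ℂ] qq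
def Q : M₀ ⊗[ℂ] M := 1 ⊗ₜ[ℂ] qq

lemma aux_sq {A B : Type} [CommRing A] [Ring B] [Algebra ℂ A] [Algebra ℂ B]
    (a : A) (x y : B) (ha : a * a = a) (hx : x * x = x) (hy : y * y = y) :
    (a ⊗ₜ[ℂ] x + (1 - a) ⊗ₜ[ℂ] y) * (a ⊗ₜ[ℂ] x + (1 - a) ⊗ₜ[ℂ] y)
      = a ⊗ₜ[ℂ] x + (1 - a) ⊗ₜ[ℂ] y := by
  have h1 : a * (1 - a) = 0 := by rw [mul_one_sub, ha, sub_self]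
  have h2 : (1 - a) * a = 0 := by rw [one_sub_mul, ha, sub_self]
  have h3 : (1 - a) * (1 - a) = 1 - a := by rw [one_sub_mul, mul_one_sub, ha]; ring
  simp only [add_mul, mul_add, Algebra.TensorProduct.tmul_mul_tmul, h1, h2, h3, ha, hx, hy,
    TensorProduct.zero_tmul, add_zero, zero_add]

lemma P_sq : P * P = P := aux_sq pbar pp qq pbar_sq pp_sq qq_sq

lemma Q_sq : Q * Q = Q := by
  simp only [Q, Algebra.TensorProduct.tmul_mul_tmul, one_mul, qq_sq]

def f : F →ₐ[ℂ] M₀ ⊗[ℂ] M := FreeAlgebra.lift ℂ ![P, Q]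

lemma f_p : f p = P := by simp [f, p, FreeAlgebra.lift_ι_apply]
lemma f_q : f q = Q := by simp [f, q, FreeAlgebra.lift_ι_apply]

lemma frel : ∀ ⦃x y : F⦄, rel x y → f x = f y := by
  rintro x y (⟨rfl, rfl⟩ | ⟨rfl, rfl⟩)
  · simp only [pow_two]; rw [map_mul, f_p, P_sq]
  · simp only [pow_two]; rw [map_mul, f_q, Q_sq]

def D0 : M →ₐ[ℂ] M₀ ⊗[ℂ] M := RingQuot.liftAlgHom ℂ ⟨f, frel⟩

lemma D0_pp : D0 pp = pbar ⊗ₜ[ℂ] pp + (1 - pbar) ⊗ₜ[ℂ] qq := by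
  have : D0 pp = f p := RingQuot.liftAlgHom_mkAlgHom_apply ℂ f frel p
  rw [this, f_p, P]

lemma D0_qq : D0 qq = 1 ⊗ₜ[ℂ] qq := by
  have : D0 qq = f q := RingQuot.liftAlgHom_mkAlgHom_apply ℂ f frel q
  rw [this, f_q, Q]

-- the counit ε : M₀ → ℂ (evaluation at 0)
def ε : M₀ →ₐ[ℂ] ℂ :=
  Ideal.Quotient.liftₐ _ (Polynomial.aeval (0 : ℂ)) (by
    intro a ha
    rw [Ideal.mem_span_singleton] at ha
    obtain ⟨c, rfl⟩ := ha
    simp)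

lemma ε_pbar : ε pbar = 0 := by
  simp [ε, pbar, Ideal.Quotient.liftₐ_apply]

lemma ε_one : ε 1 = 1 := map_one ε

def εM : M₀ ⊗[ℂ] M →ₐ[ℂ] M :=
  (Algebra.TensorProduct.lid ℂ M).toAlgHom.comp
    (Algebra.TensorProduct.map ε (AlgHom.id ℂ M))

lemma εM_tmul (a : M₀) (b : M) : εM (a ⊗ₜ[ℂ] b) = ε a • b := by
  simp [εM]

theorem fixed_points_two_point_set :
    -- (1) the algebra homomorphism Δ_L exists (is well defined on M)
    (∃ D : M →ₐ[ℂ] M₀ ⊗[ℂ] M, IsCoactL D) ∧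
    -- (2) its fixed-point subalgebra is the span of 1 and q
    (∀ D : M →ₐ[ℂ] M₀ ⊗[ℂ] M, IsCoactL D →
      ∀ h : M, D h = 1 ⊗ₜ[ℂ] h ↔ h ∈ Submodule.span ℂ ({1, qq} : Set M)) := by
  constructor
  · exact ⟨D0, D0_pp, D0_qq⟩
  · rintro D ⟨hp, hq⟩ h
    constructor
    · intro hh
      -- E = εM ∘ D maps everything into the span, and E h = h
      have key : ∀ x : M, εM (D x) ∈ Submodule.span ℂ ({1, qq} : Set M) := by
        intro x
        obtain ⟨y, rfl⟩ := RingQuot.mkAlgHom_surjective ℂ rel x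
        induction y using FreeAlgebra.induction with
        | grade0 r =>
          rw [AlgHom.commutes, AlgHom.commutes, AlgHom.commutes]
          rw [Algebra.algebraMap_eq_smul_one]
          exact Submodule.smul_mem _ r one_mem_S
        | grade1 i =>
          fin_cases i
          · show εM (D pp) ∈ _
            rw [hp, map_add, εM_tmul, εM_tmul, ε_pbar, map_sub, ε_pbar, ε_one,
              zero_smul, sub_zero, one_smul, zero_add]
            exact qq_mem_S
          · show εM (D qq) ∈ _
            rw [hq, εM_tmul, ε_one, one_smul]
            exact qq_mem_S
        | mul a b ha hb =>
          rw [map_mul, map_mul, map_mul]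
          exact S_mul ha hb
        | add a b ha hb =>
          rw [map_add, map_add, map_add]
          exact add_mem ha hb
      have := key h
      rwa [hh, εM_tmul, ε_one, one_smul] at this
    · intro hh
      induction hh using Submodule.span_induction with
      | mem x hx =>
        rcases hx with rfl | rfl
        · rw [show D 1 = 1 from D.toRingHom.map_one]; exact Algebra.TensorProduct.one_def
        · exact hq
      | zero => rw [map_zero, TensorProduct.tmul_zero]
      | add x y _ _ hx hy => rw [map_add, hx, hy, TensorProduct.tmul_add]
      | smul c x _ hx => rw [map_smul, hx, TensorProduct.tmul_smul]


end Stmt11
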